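/- arXiv:1302.3623 — 4 statements merged into one kernel-verified Lean document; each statement's English description precedes it below -/
import Mathlib

section
/- Let T be a bounded time scale and t ∈ T. The forward jump operator σ : T → ℝ is continuous at t (in the subspace topology) if and only if t = min T, or t is right-dense (σ(t) = t), or t is left-scattered (ρ(t) < t). -/
open Set Filter Topology RealInnerProductSpace

open Classical in
/-- Forward jump operator of a time scale `T`, with convention `inf ∅ = sSup T`. -/
noncomputable def tsSigma (T : Set ℝ) (t : ℝ) : ℝ :=
  if ({s | s ∈ T ∧ t < s}).Nonempty then sInf {s | s ∈ T ∧ t < s} else sSup T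

open Classical in
/-- Backward jump operator of a time scale `T`, with convention `sup ∅ = sInf T`. -/
noncomputable def tsRho (T : Set ℝ) (t : ℝ) : ℝ :=
  if ({s | s ∈ T ∧ s < t}).Nonempty then sSup {s | s ∈ T ∧ s < t} else sInf T

/-- `u` is Δ-differentiable at `t` (w.r.t. the time scale `T`) with derivative `L`. -/
def HasDeltaDerivAt {E : Type*} [NormedAddCommGroup E] [NormedSpace ℝ E]
    (T : Set ℝ) (u : ℝ → E) (t : ℝ) (L : E) : Prop :=
  Filter.Tendsto (fun s => (tsSigma T t - s)⁻¹ • (u (tsSigma T t) - u s))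
    (nhdsWithin t (T \ {tsSigma T t})) (nhds L)

/-- `u` is ∇-differentiable at `t` (w.r.t. the time scale `T`) with derivative `L`. -/
def HasNablaDerivAt {E : Type*} [NormedAddCommGroup E] [NormedSpace ℝ E]
    (T : Set ℝ) (u : ℝ → E) (t : ℝ) (L : E) : Prop :=
  Filter.Tendsto (fun s => (s - tsRho T t)⁻¹ • (u s - u (tsRho T t)))
    (nhdsWithin t (T \ {tsRho T t})) (nhds L)

/-- `T^κ = {t ∈ T : t ≤ ρ(max T)}`. -/
def Tup (T : Set ℝ) : Set ℝ := {t | t ∈ T ∧ t ≤ tsRho T (sSup T)}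

/-- `T_κ = {t ∈ T : σ(min T) ≤ t}`. -/
def Tlow (T : Set ℝ) : Set ℝ := {t | t ∈ T ∧ tsSigma T (sInf T) ≤ t}

/-!
`σ` is monotone and right-continuous, hence upper semicontinuous everywhere, so continuity within
`T` at `t` is lower semicontinuity there. Since `s ≤ σ s` on `T`, this holds when `t` is
right-dense, and it holds when no point of `T` approaches `t` from the left, because then every
`s ∈ T` near `t` satisfies `σ t ≤ σ s`. Otherwise points `s ∈ T` with `s < t` come arbitrarily
close to `t` and have `σ s ≤ t < σ t`. Finally, `T` has no points accumulating at `t` from the left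
exactly when `t = min T` or `ρ t < t`.
-/

lemma tsSigma_le_of_lt {T : Set ℝ} {x s : ℝ} (hs : s ∈ T) (hxs : x < s) : tsSigma T x ≤ s := by
  have hne : {r | r ∈ T ∧ x < r}.Nonempty := ⟨s, hs, hxs⟩
  rw [tsSigma, if_pos hne]
  exact csInf_le ⟨x, fun r hr => hr.2.le⟩ ⟨hs, hxs⟩

lemma le_tsSigma {T : Set ℝ} {x : ℝ} (hx : x ∈ T) : x ≤ tsSigma T x := by
  rw [tsSigma]
  split_ifs with h
  · exact le_csInf h fun r hr => hr.2.le
  · exact le_csSup ⟨x, fun r hr => not_lt.1 fun hxr => h ⟨r, hr, hxr⟩⟩ hx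

lemma le_tsRho_of_lt {T : Set ℝ} {x s : ℝ} (hs : s ∈ T) (hsx : s < x) : s ≤ tsRho T x := by
  have hne : {r | r ∈ T ∧ r < x}.Nonempty := ⟨s, hs, hsx⟩
  rw [tsRho, if_pos hne]
  exact le_csSup ⟨x, fun r hr => hr.2.le⟩ ⟨hs, hsx⟩

lemma tsSigma_le_sSup {T : Set ℝ} (hT : BddAbove T) (x : ℝ) : tsSigma T x ≤ sSup T := by
  rw [tsSigma]
  split_ifs with h
  · obtain ⟨s, hs⟩ := h
    exact (csInf_le ⟨x, fun r hr => hr.2.le⟩ hs).trans (le_csSup hT hs.1)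
  · exact le_rfl

theorem upperSemicontinuous_tsSigma (T : Set ℝ) : UpperSemicontinuous (tsSigma T) := by
  intro x b hb
  by_cases h : {s | s ∈ T ∧ x < s}.Nonempty
  · rw [tsSigma, if_pos h] at hb
    obtain ⟨r, ⟨hrT, hxr⟩, hrb⟩ := exists_lt_of_csInf_lt h hb
    filter_upwards [Iio_mem_nhds hxr] with y hyr using (tsSigma_le_of_lt hrT hyr).trans_lt hrb
  · have hT : BddAbove T := ⟨x, fun r hr => not_lt.1 fun hxr => h ⟨r, hr, hxr⟩⟩
    rw [tsSigma, if_neg h] at hb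
    exact Eventually.of_forall fun y => (tsSigma_le_sSup hT y).trans_lt hb

theorem lowerSemicontinuousWithinAt_tsSigma_iff {T : Set ℝ} {t : ℝ} (ht : t ∈ T) :
    LowerSemicontinuousWithinAt (tsSigma T) T t ↔
      tsSigma T t = t ∨ ∀ᶠ s in 𝓝[T] t, t ≤ s := by
  constructor
  · intro hlsc
    by_contra! ⟨hdense, hleft⟩
    have hscattered : t < tsSigma T t := (le_tsSigma ht).lt_of_ne' hdense
    have hleft : ∃ᶠ s in 𝓝[T] t, s < t := by simpa only [not_eventually, not_le] using hleft
    obtain ⟨s, hst, hts, -⟩ :=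
      (hleft.and_eventually ((hlsc t hscattered).and self_mem_nhdsWithin)).exists
    exact (tsSigma_le_of_lt ht hst).not_gt hts
  · rintro (hdense | hleft) a ha
    · rw [hdense] at ha
      filter_upwards [self_mem_nhdsWithin, nhdsWithin_le_nhds (Ioi_mem_nhds ha)] with s hsT has
        using has.trans_le (le_tsSigma hsT)
    · filter_upwards [self_mem_nhdsWithin, hleft] with s hsT hts
      rcases hts.eq_or_lt with rfl | hts
      · exact ha
      · exact ha.trans_le ((tsSigma_le_of_lt hsT hts).trans (le_tsSigma hsT))

theorem eventually_nhdsWithin_ge_iff_eq_sInf_or_tsRho_lt {T : Set ℝ} (hT : BddBelow T) {t : ℝ}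
    (ht : t ∈ T) :
    (∀ᶠ s in 𝓝[T] t, t ≤ s) ↔ t = sInf T ∨ tsRho T t < t := by
  constructor
  · intro hleft
    obtain ⟨l, u, ⟨hlt, htu⟩, hlu⟩ :=
      mem_nhds_iff_exists_Ioo_subset.1 (eventually_nhdsWithin_iff.1 hleft)
    by_cases hbelow : {s | s ∈ T ∧ s < t}.Nonempty
    · right
      have hle : ∀ s ∈ {s | s ∈ T ∧ s < t}, s ≤ l := fun s ⟨hsT, hst⟩ =>
        not_lt.1 fun hls => (hlu ⟨hls, hst.trans htu⟩ hsT).not_gt hst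
      rw [tsRho, if_pos hbelow]
      exact (csSup_le hbelow hle).trans_lt hlt
    · left
      exact (IsLeast.csInf_eq ⟨ht, fun s hs => not_lt.1 fun hst => hbelow ⟨s, hs, hst⟩⟩).symm
  · rintro (hmin | hscattered)
    · exact eventually_nhdsWithin_of_forall fun s hs => hmin ▸ csInf_le hT hs
    · filter_upwards [self_mem_nhdsWithin, nhdsWithin_le_nhds (Ioi_mem_nhds hscattered)]
        with s hsT hs
      exact not_lt.1 fun hst => (le_tsRho_of_lt hsT hst).not_gt hs

theorem stmt_2_general (T : Set ℝ) (hbd : Bornology.IsBounded T)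
    (t : ℝ) (ht : t ∈ T) :
    ContinuousWithinAt (tsSigma T) T t ↔
      t = sInf T ∨ tsSigma T t = t ∨ tsRho T t < t := by
  rw [continuousWithinAt_iff_lower_upperSemicontinuousWithinAt,
    lowerSemicontinuousWithinAt_tsSigma_iff ht,
    eventually_nhdsWithin_ge_iff_eq_sInf_or_tsRho_lt hbd.bddBelow ht]
  simp only [(upperSemicontinuous_tsSigma T).upperSemicontinuousWithinAt T t, and_true]
  tauto

/-- `σ` is continuous at `t ∈ T` iff `t = min T`, or `t` is right-dense,
or `t` is left-scattered. -/
theorem stmt_2 (T : Set ℝ) (hne : T.Nonempty) (hbd : Bornology.IsBounded T) (hcl : IsClosed T)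
    (hcard : ∃ x ∈ T, ∃ y ∈ T, ∃ z ∈ T, x ≠ y ∧ x ≠ z ∧ y ≠ z)
    (t : ℝ) (ht : t ∈ T) :
    ContinuousWithinAt (tsSigma T) T t ↔
      t = sInf T ∨ tsSigma T t = t ∨ tsRho T t < t :=
  stmt_2_general T hbd t ht
end

section
/- Let T be a bounded time scale with σ continuous on T. Then every function u : T → ℝⁿ that is rd-continuous (continuous at every right-dense point and admitting left-sided limits at every left-dense point) is continuous on T. -/
/-!
At a right-dense point `u` is continuous by assumption. At a right-scattered point `t < σ t`,
continuity of `σ` makes `t` isolated in `T`: no point of `T` lies strictly between `t` and `σ t`,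
and every `s < t` in `T` has `σ s ≤ t < σ t`, so such `s` stay away from `t`.
Every function is continuous at an isolated point.
-/

open Set Filter Topology RealInnerProductSpace

lemma le_tsSigma_s5 {T : Set ℝ} (hT : BddAbove T) {t : ℝ} (ht : t ∈ T) : t ≤ tsSigma T t := by
  unfold tsSigma
  split_ifs with h
  · exact le_csInf h fun s hs => hs.2.le
  · exact le_csSup hT ht

lemma tsSigma_le {T : Set ℝ} (hT : BddBelow T) {t s : ℝ} (hs : s ∈ T) (hts : t < s) :
    tsSigma T t ≤ s := by
  unfold tsSigma
  rw [if_pos ⟨s, hs, hts⟩]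
  exact csInf_le (hT.mono fun x hx => hx.1) ⟨hs, hts⟩

lemma nhdsWithin_eq_pure_of_lt_tsSigma {T : Set ℝ} (hT : BddBelow T) {t : ℝ} (ht : t ∈ T)
    (hσ : ContinuousWithinAt (tsSigma T) T t) (hlt : t < tsSigma T t) : 𝓝[T] t = pure t := by
  refine le_antisymm ?_ (pure_le_nhdsWithin ht)
  have not_left : ∀ᶠ s in 𝓝[T] t, ¬ s < t := by
    filter_upwards [self_mem_nhdsWithin, hσ.eventually (lt_mem_nhds hlt)] with s hsT hσs hst
    exact (tsSigma_le hT ht hst).not_gt hσs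
  have not_right : ∀ᶠ s in 𝓝[T] t, ¬ t < s := by
    filter_upwards [self_mem_nhdsWithin, mem_nhdsWithin_of_mem_nhds (gt_mem_nhds hlt)]
      with s hsT hsσ hts
    exact (tsSigma_le hT hsT hts).not_gt hsσ
  rw [le_pure_iff]
  filter_upwards [not_left, not_right] with s hl hr
  exact le_antisymm (not_lt.1 hr) (not_lt.1 hl)

theorem stmt_5_general (T : Set ℝ) (hbd : Bornology.IsBounded T)
    (hcont : ContinuousOn (tsSigma T) T)
    (n : ℕ) (u : ℝ → EuclideanSpace ℝ (Fin n))
    (hrd : ∀ t ∈ T, tsSigma T t = t → ContinuousWithinAt u T t) :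
    ContinuousOn u T := by
  intro t ht
  rcases (le_tsSigma_s5 hbd.bddAbove ht).eq_or_lt with h | h
  · exact hrd t ht h.symm
  · rw [ContinuousWithinAt, nhdsWithin_eq_pure_of_lt_tsSigma hbd.bddBelow ht (hcont t ht) h]
    exact tendsto_pure_nhds u t

/-- If `σ` is continuous on `T`, every rd-continuous function `u : T → ℝⁿ`
(continuous at right-dense points, left-sided limits at left-dense points) is continuous on `T`. -/
theorem stmt_5 (T : Set ℝ) (hne : T.Nonempty) (hbd : Bornology.IsBounded T) (hcl : IsClosed T)
    (hcont : ContinuousOn (tsSigma T) T)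
    (n : ℕ) (u : ℝ → EuclideanSpace ℝ (Fin n))
    (hrd : ∀ t ∈ T, tsSigma T t = t → ContinuousWithinAt u T t)
    (hld : ∀ t ∈ T, tsRho T t = t →
      ∃ l : EuclideanSpace ℝ (Fin n), Filter.Tendsto u (nhdsWithin t (T ∩ Set.Iio t)) (nhds l)) :
    ContinuousOn u T :=
  stmt_5_general T hbd hcont n u hrd
end

section
/- Chain-type rule on time scales: Let T be a bounded time scale, u : T → ℝⁿ, and t ∈ T^κ_κ = T^κ ∩ T_κ. If σ is ∇-differentiable at t and u is Δ-differentiable at t, then the composition u ∘ σ is ∇-differentiable at t with (u ∘ σ)^∇(t) = σ^∇(t) · u^Δ(t). -/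
open Set Filter Topology RealInnerProductSpace

/-!
First, `σ(ρ(t)) = t`. This is automatic when `t` is left-scattered; otherwise it says
`σ(t) = t`, which for `t = min T` is the condition `t ∈ T_κ`, and for left-dense `t` holds
because `σ ≤ t` to the left of `t` while `σ`, being ∇-differentiable, is continuous at `t`. Hence a right-scattered `t` is isolated in `T`, and the claim is an identity between
difference quotients over the gaps `[ρ(t), t]` and `[t, σ(t)]`. At a right-dense `t`, write
`u r - u t = (r - t) • G r` with `G` continuous at `t` within `T` and `G t = u^Δ(t)`; then the
∇-quotient of `u ∘ σ` is the ∇-quotient of `σ` times `G ∘ σ`, and `σ(s) → t` as `s → t`.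
-/

section JumpOperators

variable {T : Set ℝ} {s t : ℝ}

lemma tsSigma_mem (hbd : Bornology.IsBounded T) (hcl : IsClosed T) (hs : s ∈ T) :
    tsSigma T s ∈ T := by
  unfold tsSigma
  split_ifs with h
  · exact hcl.closure_subset_iff.mpr (fun _ hr => hr.1)
      (csInf_mem_closure h (hbd.bddBelow.mono fun _ hr => hr.1))
  · exact hcl.csSup_mem ⟨s, hs⟩ hbd.bddAbove

lemma le_tsSigma_s10 (hbd : Bornology.IsBounded T) (hs : s ∈ T) : s ≤ tsSigma T s := by
  unfold tsSigma
  split_ifs with h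
  · exact le_csInf h fun _ hr => hr.2.le
  · exact le_csSup hbd.bddAbove hs

lemma tsSigma_le_s10 (hbd : Bornology.IsBounded T) (ht : t ∈ T) (h : s < t) : tsSigma T s ≤ t := by
  unfold tsSigma
  rw [if_pos ⟨t, ht, h⟩]
  exact csInf_le (hbd.bddBelow.mono fun _ hr => hr.1) ⟨ht, h⟩

lemma tsRho_le (hbd : Bornology.IsBounded T) (ht : t ∈ T) : tsRho T t ≤ t := by
  unfold tsRho
  split_ifs with h
  · exact csSup_le h fun _ hr => hr.2.le
  · exact csInf_le hbd.bddBelow ht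

lemma le_tsRho (hbd : Bornology.IsBounded T) (hs : s ∈ T) (h : s < t) : s ≤ tsRho T t := by
  unfold tsRho
  rw [if_pos ⟨s, hs, h⟩]
  exact le_csSup (hbd.bddAbove.mono fun _ hr => hr.1) ⟨hs, h⟩

lemma eq_of_tsRho_lt_of_lt_tsSigma (hbd : Bornology.IsBounded T) (hs : s ∈ T)
    (hρ : tsRho T t < s) (hσ : s < tsSigma T t) : s = t := by
  rcases lt_trichotomy s t with h | h | h
  · exact absurd (le_tsRho hbd hs h) hρ.not_ge
  · exact h
  · exact absurd (tsSigma_le_s10 hbd hs h) hσ.not_ge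

lemma tsSigma_tsRho_of_tsRho_lt (hbd : Bornology.IsBounded T) (ht : t ∈ T)
    (h : tsRho T t < t) : tsSigma T (tsRho T t) = t := by
  refine le_antisymm (tsSigma_le_s10 hbd ht h) ?_
  unfold tsSigma
  rw [if_pos ⟨t, ht, h⟩]
  exact le_csInf ⟨t, ht, h⟩ fun r hr => not_lt.1 fun hrt => (le_tsRho hbd hr.1 hrt).not_gt hr.2

lemma nhdsWithin_eq_pure_of_tsRho_lt_of_lt_tsSigma (hbd : Bornology.IsBounded T) (ht : t ∈ T)
    (hρ : tsRho T t < t) (hσ : t < tsSigma T t) : 𝓝[T] t = pure t :=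
  le_antisymm (le_pure_iff.2 <| mem_nhdsWithin.2 ⟨Ioo _ _, isOpen_Ioo, ⟨hρ, hσ⟩,
    fun _ ⟨⟨h₁, h₂⟩, hs⟩ => eq_of_tsRho_lt_of_lt_tsSigma hbd hs h₁ h₂⟩)
    (pure_le_nhdsWithin ht)

end JumpOperators

section Derivatives

variable {E : Type*} [NormedAddCommGroup E] [NormedSpace ℝ E] {T : Set ℝ} {t : ℝ}

lemma hasNablaDerivAt_iff_tendsto_slope {f : ℝ → E} {d : E} :
    HasNablaDerivAt T f t d ↔ Tendsto (slope f (tsRho T t)) (𝓝[T \ {tsRho T t}] t) (𝓝 d) :=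
  Iff.rfl

lemma hasDeltaDerivAt_iff_tendsto_slope {f : ℝ → E} {d : E} :
    HasDeltaDerivAt T f t d ↔ Tendsto (slope f (tsSigma T t)) (𝓝[T \ {tsSigma T t}] t) (𝓝 d) :=
  tendsto_congr fun s => by rw [slope_comm, slope_def_module]

lemma HasNablaDerivAt.tendsto_nhdsWithin {f : ℝ → E} {d : E} (hf : HasNablaDerivAt T f t d)
    (ht : t ∈ T) : Tendsto f (𝓝[T \ {tsRho T t}] t) (𝓝 (f t)) := by
  rw [hasNablaDerivAt_iff_tendsto_slope] at hf
  have hlim : f (tsRho T t) + (t - tsRho T t) • d = f t := by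
    by_cases hρ : t = tsRho T t
    · rw [← hρ, sub_self, zero_smul, add_zero]
    · have hd : slope f (tsRho T t) t = d :=
        tendsto_nhds_unique (tendsto_pure_nhds _ t) (hf.mono_left (pure_le_nhdsWithin ⟨ht, hρ⟩))
      rw [← hd, sub_smul_slope, vsub_eq_sub, add_sub_cancel]
  rw [← hlim]
  refine (tendsto_const_nhds.add
    (((tendsto_id.sub tendsto_const_nhds).mono_left nhdsWithin_le_nhds).smul hf)).congr fun s => ?_
  rw [id, sub_smul_slope, vsub_eq_sub, add_sub_cancel]

lemma HasDerivWithinAt.exists_sub_eq_smul {S : Set ℝ} {u : ℝ → E} {x : ℝ} {L : E}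
    (hu : HasDerivWithinAt u L S x) :
    ∃ G : ℝ → E, Tendsto G (𝓝[S] x) (𝓝 L) ∧ ∀ r, u r - u x = (r - x) • G r := by
  classical
  refine ⟨Function.update (slope u x) x L, ?_, fun r => ?_⟩
  · have hc : ContinuousWithinAt (Function.update (slope u x) x L) S x :=
      continuousWithinAt_update_same.2 (hasDerivWithinAt_iff_tendsto_slope.1 hu)
    simpa only [ContinuousWithinAt, Function.update_self] using hc
  · rcases eq_or_ne r x with rfl | hr
    · simp
    · rw [Function.update_of_ne hr, sub_smul_slope, vsub_eq_sub]

lemma HasNablaDerivAt.comp_hasDerivWithinAt {S : Set ℝ} {φ : ℝ → ℝ} {u : ℝ → E} {x d : ℝ} {L : E}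
    (hφ : HasNablaDerivAt T φ t d) (hu : HasDerivWithinAt u L S x) (ht : t ∈ T)
    (hmaps : MapsTo φ T S) (hρ : φ (tsRho T t) = x) (hx : φ t = x) :
    HasNablaDerivAt T (fun s => u (φ s)) t (d • L) := by
  obtain ⟨G, hG, hsub⟩ := hu.exists_sub_eq_smul
  have hφlim : Tendsto φ (𝓝[T \ {tsRho T t}] t) (𝓝[S] x) :=
    tendsto_nhdsWithin_iff.2 ⟨hx ▸ hφ.tendsto_nhdsWithin ht,
      eventually_mem_nhdsWithin.mono fun _ hs => hmaps hs.1⟩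
  rw [hasNablaDerivAt_iff_tendsto_slope] at hφ ⊢
  refine (hφ.smul (hG.comp hφlim)).congr fun s => ?_
  simp only [Function.comp_apply, slope_def_module, hρ, hsub, smul_smul, smul_eq_mul]

end Derivatives

section Chain

variable {E : Type*} [NormedAddCommGroup E] [NormedSpace ℝ E] {T : Set ℝ} {t d : ℝ}

lemma tsSigma_eq_self_of_tsRho_eq (hbd : Bornology.IsBounded T) (ht : t ∈ T)
    (hκ : tsSigma T (sInf T) ≤ t) (hσ : HasNablaDerivAt T (tsSigma T) t d)
    (hρ : tsRho T t = t) : tsSigma T t = t := by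
  refine le_antisymm ?_ (le_tsSigma_s10 hbd ht)
  by_cases hleft : ({s | s ∈ T ∧ s < t}).Nonempty
  · have hsup : sSup {s | s ∈ T ∧ s < t} = t := (if_pos hleft : tsRho T t = _).symm.trans hρ
    have hcl := csSup_mem_closure hleft (hbd.bddAbove.mono fun _ hs => hs.1)
    rw [hsup] at hcl
    have : (𝓝[{s | s ∈ T ∧ s < t}] t).NeBot := mem_closure_iff_nhdsWithin_neBot.1 hcl
    have hlim : Tendsto (tsSigma T) (𝓝[{s | s ∈ T ∧ s < t}] t) (𝓝 (tsSigma T t)) :=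
      (hσ.tendsto_nhdsWithin ht).mono_left <|
      nhdsWithin_mono t fun s (hs : s ∈ T ∧ s < t) => ⟨hs.1, hρ.symm ▸ hs.2.ne⟩
    exact le_of_tendsto hlim (eventually_mem_nhdsWithin.mono fun _ hs => tsSigma_le_s10 hbd ht hs.2)
  · have hmin : sInf T = t := (if_neg hleft : tsRho T t = _).symm.trans hρ
    rwa [hmin] at hκ

lemma tsSigma_tsRho_of_hasNablaDerivAt (hbd : Bornology.IsBounded T) (ht : t ∈ T)
    (hκ : tsSigma T (sInf T) ≤ t) (hσ : HasNablaDerivAt T (tsSigma T) t d) :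
    tsSigma T (tsRho T t) = t := by
  rcases (tsRho_le hbd ht).lt_or_eq with hρ | hρ
  · exact tsSigma_tsRho_of_tsRho_lt hbd ht hρ
  · rw [hρ]
    exact tsSigma_eq_self_of_tsRho_eq hbd ht hκ hσ hρ

lemma hasNablaDerivAt_comp_tsSigma_of_isolated (hbd : Bornology.IsBounded T) (ht : t ∈ T)
    (hρ : tsRho T t < t) (hσt : t < tsSigma T t) {u : ℝ → E} {L : E}
    (hσ : HasNablaDerivAt T (tsSigma T) t d) (hu : HasDeltaDerivAt T u t L) :
    HasNablaDerivAt T (fun s => u (tsSigma T s)) t (d • L) := by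
  have hpure : ∀ x ≠ t, 𝓝[T \ {x}] t = pure t := fun x hx =>
    le_antisymm ((nhdsWithin_mono t sdiff_subset).trans
      (nhdsWithin_eq_pure_of_tsRho_lt_of_lt_tsSigma hbd ht hρ hσt).le)
      (pure_le_nhdsWithin ⟨ht, hx.symm⟩)
  rw [hasNablaDerivAt_iff_tendsto_slope, hpure _ hρ.ne] at hσ ⊢
  rw [hasDeltaDerivAt_iff_tendsto_slope, hpure _ hσt.ne'] at hu
  have hd := tendsto_nhds_unique (tendsto_pure_nhds _ t) hσ
  have hL := tendsto_nhds_unique (tendsto_pure_nhds _ t) hu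
  convert tendsto_pure_nhds _ t using 2
  rw [← hd, ← hL, slope_comm u, slope_def_module, slope_def_module, slope_def_module,
    tsSigma_tsRho_of_tsRho_lt hbd ht hρ, smul_smul, smul_eq_mul, mul_assoc,
    mul_inv_cancel₀ (sub_ne_zero.2 hσt.ne'), mul_one]

end Chain

theorem stmt_10_general (T : Set ℝ) (hbd : Bornology.IsBounded T) (hcl : IsClosed T)
    (n : ℕ) (u : ℝ → EuclideanSpace ℝ (Fin n))
    (t : ℝ) (ht : t ∈ Tup T ∩ Tlow T)
    (d : ℝ) (hσ : HasNablaDerivAt T (tsSigma T) t d)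
    (L : EuclideanSpace ℝ (Fin n)) (hu : HasDeltaDerivAt T u t L) :
    HasNablaDerivAt T (fun s => u (tsSigma T s)) t (d • L) := by
  obtain ⟨-, htT, hκ⟩ := ht
  have hσρ := tsSigma_tsRho_of_hasNablaDerivAt hbd htT hκ hσ
  rcases (le_tsSigma_s10 hbd htT).eq_or_lt with hσt | hσt
  · rw [hasDeltaDerivAt_iff_tendsto_slope, ← hσt] at hu
    have hu' : HasDerivWithinAt u L T t := hasDerivWithinAt_iff_tendsto_slope.2 hu
    exact hσ.comp_hasDerivWithinAt hu' htT (fun _ hs => tsSigma_mem hbd hcl hs) hσρ hσt.symm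
  · have hρ : tsRho T t < t := (tsRho_le hbd htT).lt_of_ne fun hρ => hσt.ne' (by rwa [hρ] at hσρ)
    exact hasNablaDerivAt_comp_tsSigma_of_isolated hbd htT hρ hσt hσ hu

/-- Chain-type rule: if `σ` is ∇-differentiable at `t ∈ T^κ_κ` and `u` is
Δ-differentiable at `t`, then `u ∘ σ` is ∇-differentiable at `t` with
`(u ∘ σ)^∇(t) = σ^∇(t) • u^Δ(t)`. -/
theorem stmt_10 (T : Set ℝ) (hne : T.Nonempty) (hbd : Bornology.IsBounded T) (hcl : IsClosed T)
    (hcard : ∃ x ∈ T, ∃ y ∈ T, ∃ z ∈ T, x ≠ y ∧ x ≠ z ∧ y ≠ z)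
    (n : ℕ) (u : ℝ → EuclideanSpace ℝ (Fin n))
    (t : ℝ) (ht : t ∈ Tup T ∩ Tlow T)
    (d : ℝ) (hσ : HasNablaDerivAt T (tsSigma T) t d)
    (L : EuclideanSpace ℝ (Fin n)) (hu : HasDeltaDerivAt T u t L) :
    HasNablaDerivAt T (fun s => u (tsSigma T s)) t (d • L) :=
  stmt_10_general T hbd hcl n u t ht d hσ L hu
end

section
/- Let T = {0} ∪ {z_k⁻ : k ∈ ℕ} ∪ {z_k⁺ : k ∈ ℕ} where (z_k⁻) is a strictly increasing sequence of negative reals tending to 0 and (z_k⁺) is a strictly decreasing sequence of positive reals tending to 0. If lim_{k→∞} z_{k+1}⁻/z_k⁻ = lim_{k→∞} z_{k−1}⁺/z_k⁺ = ℓ, then necessarily ℓ = 1 and σ is ∇-differentiable at 0 with σ^∇(0) = 1. -/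
/-!
Since `z⁻` increases to `0` and `z⁺` decreases to `0`, the points of `T` below `0` are exactly the
`z_k⁻` and those above are exactly the `z_k⁺`, so `ρ(0) = σ(0) = 0`, `σ(z_k⁻) = z_{k+1}⁻` and
`σ(z_{k+1}⁺) = z_k⁺`. The ∇-difference quotient of `σ` at `0` is therefore `σ(s)/s`, which along
the two sequences is `z_{k+1}⁻/z_k⁻` and `z_k⁺/z_{k+1}⁺`. Every ratio of the first kind is `≤ 1` and
every ratio of the second kind is `≥ 1`, so a common limit `ℓ` must be `1`, and then `σ(s)/s → 1`.
-/

open Set Filter Topology RealInnerProductSpace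

section Sequences

variable {α β : Type*} [TopologicalSpace α] [Preorder α] [OrderClosedTopology α]
  [PartialOrder β] [IsDirectedOrder β] [NoMaxOrder β] {f : β → α} {a : α}

theorem StrictMono.lt_of_tendsto_atTop (hf : StrictMono f) (ha : Tendsto f atTop (𝓝 a))
    (b : β) : f b < a := by
  obtain ⟨c, hbc⟩ := exists_gt b
  exact (hf hbc).trans_le (hf.monotone.ge_of_tendsto ha c)

theorem StrictAnti.lt_of_tendsto_atTop (hf : StrictAnti f) (ha : Tendsto f atTop (𝓝 a))
    (b : β) : a < f b :=
  StrictMono.lt_of_tendsto_atTop (α := αᵒᵈ) hf ha b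

end Sequences

/-- Near a point that a sequence never attains, its range is only visited by tails. -/
theorem tendsto_nhdsWithin_range_of_tendsto_comp {X Y : Type*} [TopologicalSpace X] [T1Space X]
    {f : ℕ → X} {a : X} {g : X → Y} {l : Filter Y} (hfa : ∀ n, f n ≠ a)
    (hg : Tendsto (g ∘ f) atTop l) : Tendsto g (𝓝[range f] a) l := by
  refine (tendsto_map'_iff.2 hg).mono_left fun S hS => ?_
  obtain ⟨N, hN⟩ := mem_atTop_sets.1 (mem_map.1 hS)
  refine mem_nhdsWithin.2 ⟨(f '' Iio N)ᶜ, ((finite_Iio N).image f).isClosed.isOpen_compl,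
    fun ⟨n, _, hn⟩ => hfa n hn, ?_⟩
  rintro _ ⟨hn, n, rfl⟩
  exact hN n (not_lt.1 fun hlt => hn ⟨n, hlt, rfl⟩)

theorem tsSigma_eq_of_isLeast {T : Set ℝ} {t a : ℝ} (h : IsLeast {s | s ∈ T ∧ t < s} a) :
    tsSigma T t = a := by
  rw [tsSigma, if_pos h.nonempty, h.csInf_eq]

theorem tsSigma_eq_of_isGLB {T : Set ℝ} {t a : ℝ} (hne : {s | s ∈ T ∧ t < s}.Nonempty)
    (h : IsGLB {s | s ∈ T ∧ t < s} a) : tsSigma T t = a := by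
  rw [tsSigma, if_pos hne, h.csInf_eq hne]

theorem tsRho_eq_of_isLUB {T : Set ℝ} {t a : ℝ} (hne : {s | s ∈ T ∧ s < t}.Nonempty)
    (h : IsLUB {s | s ∈ T ∧ s < t} a) : tsRho T t = a := by
  rw [tsRho, if_pos hne, h.csSup_eq hne]

def twoSidedTimeScale (zm zp : ℕ → ℝ) : Set ℝ := insert 0 (range zm ∪ range zp)

namespace twoSidedTimeScale

variable {zm zp : ℕ → ℝ}

theorem zm_mem (k : ℕ) : zm k ∈ twoSidedTimeScale zm zp :=
  mem_insert_of_mem _ (Or.inl ⟨k, rfl⟩)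

theorem zp_mem (k : ℕ) : zp k ∈ twoSidedTimeScale zm zp :=
  mem_insert_of_mem _ (Or.inr ⟨k, rfl⟩)

theorem diff_zero (hzm : ∀ k, zm k < 0) (hzp : ∀ k, 0 < zp k) :
    twoSidedTimeScale zm zp \ {0} = range zm ∪ range zp := by
  refine insert_sdiff_self_of_notMem ?_
  rintro (⟨k, hk⟩ | ⟨k, hk⟩)
  exacts [(hzm k).ne hk, (hzp k).ne' hk]

theorem setOf_lt_zero (hzm : ∀ k, zm k < 0) (hzp : ∀ k, 0 < zp k) :
    {s | s ∈ twoSidedTimeScale zm zp ∧ s < 0} = range zm := by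
  ext s
  constructor
  · rintro ⟨rfl | ⟨k, rfl⟩ | ⟨k, rfl⟩, hs⟩
    exacts [absurd hs (lt_irrefl 0), ⟨k, rfl⟩, absurd hs (hzp k).not_gt]
  · rintro ⟨k, rfl⟩
    exact ⟨zm_mem k, hzm k⟩

theorem setOf_zero_lt (hzm : ∀ k, zm k < 0) (hzp : ∀ k, 0 < zp k) :
    {s | s ∈ twoSidedTimeScale zm zp ∧ 0 < s} = range zp := by
  ext s
  constructor
  · rintro ⟨rfl | ⟨k, rfl⟩ | ⟨k, rfl⟩, hs⟩
    exacts [absurd hs (lt_irrefl 0), absurd hs (hzm k).not_gt, ⟨k, rfl⟩]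
  · rintro ⟨k, rfl⟩
    exact ⟨zp_mem k, hzp k⟩

theorem tsRho_zero (hzm_mono : StrictMono zm) (hzm_lim : Tendsto zm atTop (𝓝 0))
    (hzp : ∀ k, 0 < zp k) : tsRho (twoSidedTimeScale zm zp) 0 = 0 := by
  have hzm := hzm_mono.lt_of_tendsto_atTop hzm_lim
  refine tsRho_eq_of_isLUB ?_ ?_ <;> rw [setOf_lt_zero hzm hzp]
  exacts [range_nonempty zm, isLUB_of_tendsto_atTop hzm_mono.monotone hzm_lim]

theorem tsSigma_zero (hzm : ∀ k, zm k < 0) (hzp_anti : StrictAnti zp)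
    (hzp_lim : Tendsto zp atTop (𝓝 0)) : tsSigma (twoSidedTimeScale zm zp) 0 = 0 := by
  have hzp := hzp_anti.lt_of_tendsto_atTop hzp_lim
  refine tsSigma_eq_of_isGLB ?_ ?_ <;> rw [setOf_zero_lt hzm hzp]
  exacts [range_nonempty zp, isGLB_of_tendsto_atTop hzp_anti.antitone hzp_lim]

theorem tsSigma_zm (hzm_mono : StrictMono zm) (hzm : ∀ k, zm k < 0) (hzp : ∀ k, 0 < zp k)
    (k : ℕ) : tsSigma (twoSidedTimeScale zm zp) (zm k) = zm (k + 1) := by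
  refine tsSigma_eq_of_isLeast ⟨⟨zm_mem _, hzm_mono k.lt_succ_self⟩, ?_⟩
  rintro s ⟨rfl | ⟨j, rfl⟩ | ⟨j, rfl⟩, hs⟩
  · exact (hzm _).le
  · exact hzm_mono.monotone (hzm_mono.lt_iff_lt.1 hs)
  · exact ((hzm _).trans (hzp j)).le

theorem tsSigma_zp_succ (hzm : ∀ k, zm k < 0) (hzp_anti : StrictAnti zp) (hzp : ∀ k, 0 < zp k)
    (k : ℕ) : tsSigma (twoSidedTimeScale zm zp) (zp (k + 1)) = zp k := by
  refine tsSigma_eq_of_isLeast ⟨⟨zp_mem _, hzp_anti k.lt_succ_self⟩, ?_⟩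
  rintro s ⟨rfl | ⟨j, rfl⟩ | ⟨j, rfl⟩, hs⟩
  · exact absurd hs (hzp _).not_gt
  · exact absurd hs ((hzm j).trans (hzp _)).not_gt
  · exact hzp_anti.antitone (Nat.lt_succ_iff.1 (hzp_anti.lt_iff_gt.1 hs))

theorem hasNablaDerivAt_tsSigma_zero (hzm_mono : StrictMono zm)
    (hzm_lim : Tendsto zm atTop (𝓝 0)) (hzp_anti : StrictAnti zp)
    (hzp_lim : Tendsto zp atTop (𝓝 0))
    (hm : Tendsto (fun k => zm (k + 1) / zm k) atTop (𝓝 1))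
    (hp : Tendsto (fun k => zp k / zp (k + 1)) atTop (𝓝 1)) :
    HasNablaDerivAt (twoSidedTimeScale zm zp) (tsSigma (twoSidedTimeScale zm zp)) 0 1 := by
  have hzm := hzm_mono.lt_of_tendsto_atTop hzm_lim
  have hzp := hzp_anti.lt_of_tendsto_atTop hzp_lim
  rw [HasNablaDerivAt, tsRho_zero hzm_mono hzm_lim hzp, tsSigma_zero hzm hzp_anti hzp_lim,
    diff_zero hzm hzp, nhdsWithin_union]
  simp only [sub_zero, smul_eq_mul, inv_mul_eq_div]
  refine Tendsto.sup ?_ ?_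
  · refine tendsto_nhdsWithin_range_of_tendsto_comp (fun k => (hzm k).ne) ?_
    simpa only [Function.comp_def, tsSigma_zm hzm_mono hzm hzp] using hm
  · refine tendsto_nhdsWithin_range_of_tendsto_comp (fun k => (hzp k).ne') ?_
    rw [← tendsto_add_atTop_iff_nat 1]
    simpa only [Function.comp_def, tsSigma_zp_succ hzm hzp_anti hzp] using hp

end twoSidedTimeScale

theorem stmt_16_general (zm zp : ℕ → ℝ)
    (hzm_mono : StrictMono zm)
    (hzm_lim : Filter.Tendsto zm Filter.atTop (nhds 0))
    (hzp_anti : StrictAnti zp)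
    (hzp_lim : Filter.Tendsto zp Filter.atTop (nhds 0))
    (ℓ : ℝ)
    (hm : Filter.Tendsto (fun k => zm (k + 1) / zm k) Filter.atTop (nhds ℓ))
    (hp : Filter.Tendsto (fun k => zp k / zp (k + 1)) Filter.atTop (nhds ℓ)) :
    ℓ = 1 ∧
    HasNablaDerivAt (insert 0 (Set.range zm ∪ Set.range zp))
      (tsSigma (insert 0 (Set.range zm ∪ Set.range zp))) 0 1 := by
  have hzm := hzm_mono.lt_of_tendsto_atTop hzm_lim
  have hzp := hzp_anti.lt_of_tendsto_atTop hzp_lim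
  have hℓ_le : ℓ ≤ 1 := le_of_tendsto' hm fun k =>
    (div_le_one_of_neg (hzm k)).2 (hzm_mono k.lt_succ_self).le
  have hℓ_ge : 1 ≤ ℓ := ge_of_tendsto' hp fun k =>
    (one_le_div (hzp (k + 1))).2 (hzp_anti k.lt_succ_self).le
  obtain rfl : ℓ = 1 := hℓ_le.antisymm hℓ_ge
  exact ⟨rfl,
    twoSidedTimeScale.hasNablaDerivAt_tsSigma_zero hzm_mono hzm_lim hzp_anti hzp_lim hm hp⟩

/-- For `T = {0} ∪ {z_k⁻} ∪ {z_k⁺}` with `z_k⁻ ↑ 0` negative and `z_k⁺ ↓ 0`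
positive, if `z_{k+1}⁻/z_k⁻ → ℓ` and `z_{k−1}⁺/z_k⁺ → ℓ`, then `ℓ = 1` and `σ` is
∇-differentiable at `0` with `σ^∇(0) = 1`. -/
theorem stmt_16 (zm zp : ℕ → ℝ)
    (hzm_neg : ∀ k, zm k < 0) (hzm_mono : StrictMono zm)
    (hzm_lim : Filter.Tendsto zm Filter.atTop (nhds 0))
    (hzp_pos : ∀ k, 0 < zp k) (hzp_anti : StrictAnti zp)
    (hzp_lim : Filter.Tendsto zp Filter.atTop (nhds 0))
    (ℓ : ℝ)
    (hm : Filter.Tendsto (fun k => zm (k + 1) / zm k) Filter.atTop (nhds ℓ))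
    (hp : Filter.Tendsto (fun k => zp k / zp (k + 1)) Filter.atTop (nhds ℓ)) :
    ℓ = 1 ∧
    HasNablaDerivAt (insert 0 (Set.range zm ∪ Set.range zp))
      (tsSigma (insert 0 (Set.range zm ∪ Set.range zp))) 0 1 :=
  stmt_16_general zm zp hzm_mono hzm_lim hzp_anti hzp_lim ℓ hm hp
end
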